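/- arXiv:2201.07379 — 2 statements merged into one kernel-verified Lean document; each statement's English description precedes it below -/
import Mathlib

section
/- Proposition 2 (quasi-concavity of the max–min power-allocation problem (P1)): the objective function T ↦ min_{1≤k≤K} SINR_k(T) is quasiconcave on the nonnegative orthant O = {T ∈ ℝ^{K×M} : T_{k,m} ≥ 0 for all k, m}; that is, for every t ∈ ℝ the superlevel set {T ∈ O : t ≤ min_{1≤k≤K} SINR_k(T)} is convex. -/
/-!
Since every `SINR_k` is nonnegative, for `t ≤ 0` the superlevel set is the whole orthant. For
`t > 0` and a row `x ≥ 0`, the condition `t ≤ SINR_k(x)` is the second-order cone constraint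
`‖((√w_m x_m)_m, √c)‖₂ ≤ √(a_k / t) ⟨u_k, x⟩`: a convex function of `x` bounded by a linear one,
so its solution set is convex. The superlevel set of the minimum is the intersection over `k` of
the preimages of these row sets under the projections `T ↦ T k`.
-/

open Finset Real

theorem convex_setOf_norm_le {E F : Type*} [AddCommGroup E] [Module ℝ E]
    [SeminormedAddCommGroup F] [NormedSpace ℝ F] {s : Set E} (hs : Convex ℝ s)
    (f : E →ᵃ[ℝ] F) (g : E →ₗ[ℝ] ℝ) : Convex ℝ {x ∈ s | ‖f x‖ ≤ g x} := by
  have h := ((((convexOn_norm convex_univ).comp_affineMap f).subset (Set.subset_univ s) hs).sub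
    (g.concaveOn hs)).convex_le 0
  simpa only [Pi.sub_apply, Function.comp_apply, sub_nonpos] using h

section SINR

variable {ι : Type*} [Fintype ι]

noncomputable def sinr (a : ℝ) (u w : ι → ℝ) (c : ℝ) (x : ι → ℝ) : ℝ :=
  a * (∑ m, u m * x m) ^ 2 / (∑ m, w m * x m ^ 2 + c)

noncomputable def socMap (w : ι → ℝ) (c : ℝ) : (ι → ℝ) →ᵃ[ℝ] EuclideanSpace ℝ (Option ι) :=
  ((WithLp.linearEquiv 2 ℝ (Option ι → ℝ)).symm.toLinearMap ∘ₗ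
      LinearMap.pi fun o => o.elim 0 fun m => √(w m) • LinearMap.proj m).toAffineMap +
    AffineMap.const ℝ _ (WithLp.toLp 2 fun o => o.elim √c 0)

theorem norm_socMap {w : ι → ℝ} {c : ℝ} (hw : ∀ m, 0 ≤ w m) (hc : 0 ≤ c) (x : ι → ℝ) :
    ‖socMap w c x‖ = √(∑ m, w m * x m ^ 2 + c) := by
  rw [← sq_eq_sq₀ (norm_nonneg _) (sqrt_nonneg _), sq_sqrt, EuclideanSpace.norm_sq_eq,
    Fintype.sum_option, add_comm]
  · simp [socMap, mul_pow, sq_abs, sq_sqrt (hw _), sq_sqrt hc]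
  · exact add_nonneg (sum_nonneg fun m _ => mul_nonneg (hw m) (sq_nonneg _)) hc

theorem sinr_nonneg {a c : ℝ} {u w : ι → ℝ} (ha : 0 ≤ a) (hw : ∀ m, 0 ≤ w m) (hc : 0 ≤ c)
    (x : ι → ℝ) : 0 ≤ sinr a u w c x :=
  div_nonneg (mul_nonneg ha (sq_nonneg _))
    (add_nonneg (sum_nonneg fun m _ => mul_nonneg (hw m) (sq_nonneg _)) hc)

theorem le_sinr_iff_norm_socMap_le {a c t : ℝ} {u w : ι → ℝ} {x : ι → ℝ}
    (hw : ∀ m, 0 ≤ w m) (hc : 0 < c) (ht : 0 < t) (hux : 0 ≤ ∑ m, u m * x m) :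
    t ≤ sinr a u w c x ↔ ‖socMap w c x‖ ≤ √(a / t) * ∑ m, u m * x m := by
  have hD : 0 < ∑ m, w m * x m ^ 2 + c :=
    add_pos_of_nonneg_of_pos (sum_nonneg fun m _ => mul_nonneg (hw m) (sq_nonneg _)) hc
  rw [norm_socMap hw hc.le, ← sqrt_sq hux, ← sqrt_mul' _ (sq_nonneg _), sinr, le_div_iff₀ hD,
    sqrt_le_sqrt_iff' hD, div_mul_eq_mul_div, le_div_iff₀ ht, mul_comm]

theorem convex_setOf_le_sinr {a c : ℝ} {u w : ι → ℝ} (ha : 0 ≤ a) (hu : ∀ m, 0 ≤ u m)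
    (hw : ∀ m, 0 ≤ w m) (hc : 0 < c) (t : ℝ) :
    Convex ℝ {x : ι → ℝ | (∀ m, 0 ≤ x m) ∧ t ≤ sinr a u w c x} := by
  have horth : Convex ℝ {x : ι → ℝ | ∀ m, 0 ≤ x m} := convex_Ici 0
  rcases le_or_gt t 0 with ht | ht
  · simpa only [ht.trans (sinr_nonneg ha hw hc.le _), and_true] using horth
  · let ℓ : (ι → ℝ) →ₗ[ℝ] ℝ := √(a / t) • ∑ m, u m • LinearMap.proj m
    have hsoc : {x : ι → ℝ | (∀ m, 0 ≤ x m) ∧ t ≤ sinr a u w c x} =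
        {x ∈ {x : ι → ℝ | ∀ m, 0 ≤ x m} | ‖socMap w c x‖ ≤ ℓ x} := by
      ext x
      refine and_congr_right fun hx => ?_
      rw [le_sinr_iff_norm_socMap_le hw hc ht (sum_nonneg fun m _ => mul_nonneg (hu m) (hx m))]
      simp [ℓ]
    rw [hsoc]
    exact convex_setOf_norm_le horth _ ℓ

end SINR

theorem stmt_0_general (K M : ℕ) (hK : 0 < K)
    (a : Fin K → ℝ) (ha : ∀ k, 0 < a k)
    (u : Fin K → Fin M → ℝ) (hu : ∀ k m, 0 < u k m)
    (w : Fin M → ℝ) (hw : ∀ m, 0 < w m)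
    (c : ℝ) (hc : 0 < c)
    (SINR : Fin K → (Fin K → Fin M → ℝ) → ℝ)
    (hSINR : ∀ k T, SINR k T =
      a k * (∑ m, u k m * T k m) ^ 2 / (∑ m, w m * (T k m) ^ 2 + c))
    (t : ℝ) :
    Convex ℝ {T : Fin K → Fin M → ℝ |
      (∀ k m, 0 ≤ T k m) ∧
      t ≤ Finset.univ.inf' ⟨⟨0, hK⟩, Finset.mem_univ _⟩ (fun k => SINR k T)} := by
  have hrows : {T : Fin K → Fin M → ℝ |
      (∀ k m, 0 ≤ T k m) ∧ t ≤ univ.inf' ⟨⟨0, hK⟩, mem_univ _⟩ (fun k => SINR k T)} =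
      ⋂ k, LinearMap.proj (R := ℝ) k ⁻¹' {x | (∀ m, 0 ≤ x m) ∧ t ≤ sinr (a k) (u k) w c x} := by
    ext T
    simp only [Set.mem_ofPred_eq, Set.mem_iInter, Set.mem_preimage, LinearMap.coe_proj,
      Function.eval, forall_and]
    refine and_congr_right' ((Finset.le_inf'_iff _ _).trans (forall_congr' fun k => ?_))
    rw [hSINR, sinr, imp_iff_right (mem_univ k)]
  rw [hrows]
  exact convex_iInter fun k => (convex_setOf_le_sinr (ha k).le (fun m => (hu k m).le)
    (fun m => (hw m).le) hc t).linear_preimage _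

/-- Proposition 2: the max–min objective `T ↦ min_k SINR_k(T)` of the power-allocation
problem (P1) is quasiconcave on the nonnegative orthant, i.e. every superlevel set
(intersected with the orthant) is convex. -/
theorem stmt_0 (K M : ℕ) (hK : 0 < K) (hM : 0 < M)
    (a : Fin K → ℝ) (ha : ∀ k, 0 < a k)
    (u : Fin K → Fin M → ℝ) (hu : ∀ k m, 0 < u k m)
    (w : Fin M → ℝ) (hw : ∀ m, 0 < w m)
    (c : ℝ) (hc : 0 < c)
    (SINR : Fin K → (Fin K → Fin M → ℝ) → ℝ)
    (hSINR : ∀ k T, SINR k T =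
      a k * (∑ m, u k m * T k m) ^ 2 / (∑ m, w m * (T k m) ^ 2 + c))
    (t : ℝ) :
    Convex ℝ {T : Fin K → Fin M → ℝ |
      (∀ k m, 0 ≤ T k m) ∧
      t ≤ Finset.univ.inf' ⟨⟨0, hK⟩, Finset.mem_univ _⟩ (fun k => SINR k T)} :=
  stmt_0_general K M hK a ha u hu w hw c hc SINR hSINR t
end

section
/- For each fixed k ∈ {1,…,K}, the single-user SINR function T ↦ SINR_k(T) is quasiconcave on the nonnegative orthant O = {T ∈ ℝ^{K×M} : T_{k,m} ≥ 0 for all k, m}; that is, for every t ∈ ℝ the superlevel set {T ∈ O : t ≤ SINR_k(T)} is convex. -/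
/-- For each fixed user `k`, the single-user SINR function `T ↦ SINR_k(T)` is
quasiconcave on the nonnegative orthant: every superlevel set (intersected with
the orthant) is convex. -/
theorem stmt_1 (K M : ℕ) (hK : 0 < K) (hM : 0 < M)
    (a : Fin K → ℝ) (ha : ∀ k, 0 < a k)
    (u : Fin K → Fin M → ℝ) (hu : ∀ k m, 0 < u k m)
    (w : Fin M → ℝ) (hw : ∀ m, 0 < w m)
    (c : ℝ) (hc : 0 < c)
    (SINR : Fin K → (Fin K → Fin M → ℝ) → ℝ)
    (hSINR : ∀ k T, SINR k T =
      a k * (∑ m, u k m * T k m) ^ 2 / (∑ m, w m * (T k m) ^ 2 + c))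
    (k : Fin K) (t : ℝ) :
    Convex ℝ {T : Fin K → Fin M → ℝ |
      (∀ k' m, 0 ≤ T k' m) ∧ t ≤ SINR k T} := by
  intro x hx y hy lam mu hlam hmu hlm
  obtain ⟨hx0, hxt⟩ := hx
  obtain ⟨hy0, hyt⟩ := hy
  set z : Fin K → Fin M → ℝ := lam • x + mu • y with hzdef
  have hzval : ∀ k' m, z k' m = lam * x k' m + mu * y k' m := by
    intro k' m; simp [hzdef]
  have hz0 : ∀ k' m, 0 ≤ z k' m := by
    intro k' m
    rw [hzval]
    have := hx0 k' m; have := hy0 k' m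
    positivity
  refine ⟨hz0, ?_⟩
  -- abbreviations
  set g : (Fin K → Fin M → ℝ) → ℝ := fun v => ∑ m, u k m * v k m with hg
  set q : (Fin K → Fin M → ℝ) → ℝ := fun v => ∑ m, w m * (v k m) ^ 2 + c with hq
  have hqpos : ∀ v : Fin K → Fin M → ℝ, 0 < q v := by
    intro v
    have h1 : (0:ℝ) ≤ ∑ m, w m * (v k m) ^ 2 :=
      Finset.sum_nonneg fun m _ => mul_nonneg (hw m).le (sq_nonneg _)
    simp only [hq]; linarith
  have hSINR' : ∀ v, SINR k v = a k * (g v) ^ 2 / q v := fun v => hSINR k v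
  rw [hSINR']
  rcases le_or_gt t 0 with ht | ht
  · exact ht.trans (div_nonneg (mul_nonneg (ha k).le (sq_nonneg _)) (hqpos z).le)
  -- t > 0
  have hgnn : ∀ v : Fin K → Fin M → ℝ, (∀ k' m, 0 ≤ v k' m) → 0 ≤ g v := by
    intro v hv
    exact Finset.sum_nonneg fun m _ => mul_nonneg (hu k m).le (hv k m)
  have key : ∀ v : Fin K → Fin M → ℝ, (∀ k' m, 0 ≤ v k' m) → t ≤ SINR k v →
      Real.sqrt t * Real.sqrt (q v) ≤ Real.sqrt (a k) * g v := by
    intro v hv hle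
    rw [hSINR'] at hle
    have h1 : t * q v ≤ a k * (g v) ^ 2 := (le_div_iff₀ (hqpos v)).mp hle
    have h2 := Real.sqrt_le_sqrt h1
    rwa [Real.sqrt_mul ht.le, Real.sqrt_mul (ha k).le,
      Real.sqrt_sq (hgnn v hv)] at h2
  -- Cauchy-Schwarz: ∑ w x y + c ≤ √(q x) * √(q y)
  have hcs : (∑ m, w m * (x k m * y k m)) + c ≤ Real.sqrt (q x) * Real.sqrt (q y) := by
    have f1 : Fin (M + 1) → ℝ := 0
    have := Real.sum_mul_le_sqrt_mul_sqrt (Finset.univ : Finset (Fin (M + 1)))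
      (Fin.snoc (fun m => Real.sqrt (w m) * x k m) (Real.sqrt c))
      (Fin.snoc (fun m => Real.sqrt (w m) * y k m) (Real.sqrt c))
    rw [Fin.sum_univ_castSucc, Fin.sum_univ_castSucc, Fin.sum_univ_castSucc] at this
    simp only [Fin.snoc_castSucc, Fin.snoc_last] at this
    have hww : ∀ m : Fin M,
        (Real.sqrt (w m) * x k m) * (Real.sqrt (w m) * y k m) = w m * (x k m * y k m) := by
      intro m
      rw [show Real.sqrt (w m) * x k m * (Real.sqrt (w m) * y k m)
        = (Real.sqrt (w m) * Real.sqrt (w m)) * (x k m * y k m) by ring,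
        Real.mul_self_sqrt (hw m).le]
    have hwx : ∀ m : Fin M, (Real.sqrt (w m) * x k m) ^ 2 = w m * (x k m) ^ 2 := by
      intro m
      rw [mul_pow, Real.sq_sqrt (hw m).le]
    have hwy : ∀ m : Fin M, (Real.sqrt (w m) * y k m) ^ 2 = w m * (y k m) ^ 2 := by
      intro m
      rw [mul_pow, Real.sq_sqrt (hw m).le]
    simp only [hww, hwx, hwy, Real.mul_self_sqrt hc.le, Real.sq_sqrt hc.le] at this
    simpa only [hq] using this
  -- q z ≤ (lam √qx + mu √qy)^2
  have hqz : q z ≤ (lam * Real.sqrt (q x) + mu * Real.sqrt (q y)) ^ 2 := by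
    have e1 : q z = lam ^ 2 * q x + 2 * lam * mu * ((∑ m, w m * (x k m * y k m)) + c)
        + mu ^ 2 * q y := by
      have hpt : ∀ m : Fin M, w m * (z k m) ^ 2 =
          lam ^ 2 * (w m * (x k m) ^ 2) + 2 * lam * mu * (w m * (x k m * y k m))
          + mu ^ 2 * (w m * (y k m) ^ 2) := by
        intro m; rw [hzval]; ring
      have h1 : lam ^ 2 + 2 * lam * mu + mu ^ 2 = 1 := by nlinarith [hlm]
      simp only [hq]
      rw [Finset.sum_congr rfl fun m _ => hpt m, Finset.sum_add_distrib,
        Finset.sum_add_distrib, ← Finset.mul_sum, ← Finset.mul_sum, ← Finset.mul_sum]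
      linear_combination (-c) * h1
    have e2 : (lam * Real.sqrt (q x) + mu * Real.sqrt (q y)) ^ 2 =
        lam ^ 2 * q x + 2 * lam * mu * (Real.sqrt (q x) * Real.sqrt (q y)) + mu ^ 2 * q y := by
      have : Real.sqrt (q x) ^ 2 = q x := Real.sq_sqrt (hqpos x).le
      have : Real.sqrt (q y) ^ 2 = q y := Real.sq_sqrt (hqpos y).le
      nlinarith [Real.sq_sqrt (hqpos x).le, Real.sq_sqrt (hqpos y).le]
    rw [e1, e2]
    have hlmu : 0 ≤ 2 * lam * mu := by positivity
    nlinarith [mul_le_mul_of_nonneg_left hcs hlmu]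
  have hsz : Real.sqrt (q z) ≤ lam * Real.sqrt (q x) + mu * Real.sqrt (q y) := by
    have hrhs : 0 ≤ lam * Real.sqrt (q x) + mu * Real.sqrt (q y) := by positivity
    calc Real.sqrt (q z) ≤ Real.sqrt ((lam * Real.sqrt (q x) + mu * Real.sqrt (q y)) ^ 2) :=
          Real.sqrt_le_sqrt hqz
      _ = _ := Real.sqrt_sq hrhs
  have hgz : g z = lam * g x + mu * g y := by
    simp only [hg, Finset.mul_sum, ← Finset.sum_add_distrib]
    refine Finset.sum_congr rfl fun m _ => ?_
    rw [hzval]; ring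
  have hkx := key x hx0 hxt
  have hky := key y hy0 hyt
  have main : Real.sqrt t * Real.sqrt (q z) ≤ Real.sqrt (a k) * g z := by
    calc Real.sqrt t * Real.sqrt (q z)
        ≤ Real.sqrt t * (lam * Real.sqrt (q x) + mu * Real.sqrt (q y)) :=
          mul_le_mul_of_nonneg_left hsz (Real.sqrt_nonneg t)
      _ = lam * (Real.sqrt t * Real.sqrt (q x)) + mu * (Real.sqrt t * Real.sqrt (q y)) := by
          ring
      _ ≤ lam * (Real.sqrt (a k) * g x) + mu * (Real.sqrt (a k) * g y) :=
          add_le_add (mul_le_mul_of_nonneg_left hkx hlam) (mul_le_mul_of_nonneg_left hky hmu)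
      _ = Real.sqrt (a k) * g z := by rw [hgz]; ring
  rw [le_div_iff₀ (hqpos z)]
  have h0 : 0 ≤ Real.sqrt t * Real.sqrt (q z) := by positivity
  have := mul_le_mul main main h0 (le_trans h0 main)
  calc t * q z = (Real.sqrt t * Real.sqrt (q z)) * (Real.sqrt t * Real.sqrt (q z)) := by
        rw [show (Real.sqrt t * Real.sqrt (q z)) * (Real.sqrt t * Real.sqrt (q z))
          = (Real.sqrt t * Real.sqrt t) * (Real.sqrt (q z) * Real.sqrt (q z)) by ring,
          Real.mul_self_sqrt ht.le, Real.mul_self_sqrt (hqpos z).le]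
    _ ≤ (Real.sqrt (a k) * g z) * (Real.sqrt (a k) * g z) := this
    _ = a k * (g z) ^ 2 := by
        rw [show (Real.sqrt (a k) * g z) * (Real.sqrt (a k) * g z)
          = (Real.sqrt (a k) * Real.sqrt (a k)) * (g z * g z) by ring,
          Real.mul_self_sqrt (ha k).le, sq]
end
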